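/- Let n ∈ ℕ, let A : [0,1] → Mₙ(ℂ) be continuous, and let g : [0,1] → Mₙ(ℂ) be a C¹ map taking values in invertible matrices. Define the gauge-transformed coefficient A^g : [0,1] → Mₙ(ℂ) by A^g(t) = g(t)⁻¹·A(t)·g(t) + g(t)⁻¹·g′(t). Then hol(A^g) = g(0)⁻¹ · hol(A) · g(1). In particular, if g(0) = g(1) then Tr(hol(A^g)) = Tr(hol(A)). (This is the gauge-covariance computation at the heart of Proposition A.2, showing the Bismut–Chern–Simons form is independent of the choice of local trivializations.) -/

import Mathlib

/-!
Both `Z` and `W t = g(0)⁻¹ · Y t · g t` solve the linear equation `X' = X · A^g` with `X 0 = 1`: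
differentiating `W` by the product rule, the term `Y' g = Y A g` and the term `Y g'` are exactly
`W` times the two summands of `A^g`. The right-hand side `X ↦ X · A^g(t)` is Lipschitz uniformly
in `t`, because `A^g` is continuous on the compact interval, so the two solutions coincide.
The trace identity is then the invariance of the trace under conjugation.
-/

attribute [local instance] Matrix.linftyOpNormedAddCommGroup Matrix.linftyOpNormedSpace
attribute [local instance] Matrix.linftyOpNormedRing Matrix.linftyOpNormedAlgebra

open Set

section LinearODE

variable {R : Type*} [NormedRing R]

theorem lipschitzWith_mul_right (c : R) : LipschitzWith ‖c‖₊ (· * c) :=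
  LipschitzWith.of_dist_le_mul fun x y => by
    simpa only [dist_eq_norm, ← sub_mul, coe_nnnorm, mul_comm ‖c‖] using norm_mul_le (x - y) c

variable [NormedSpace ℝ R] in
theorem eqOn_Icc_of_hasDerivAt_mul_right {C Y Z : ℝ → R} {a b : ℝ}
    (hC : ContinuousOn C (Icc a b))
    (hY : ∀ t ∈ Icc a b, HasDerivAt Y (Y t * C t) t)
    (hZ : ∀ t ∈ Icc a b, HasDerivAt Z (Z t * C t) t)
    (ha : Y a = Z a) : EqOn Y Z (Icc a b) := by
  obtain ⟨M, hM⟩ := isCompact_Icc.exists_bound_of_continuousOn hC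
  have hLip : ∀ t ∈ Ico a b, LipschitzOnWith M.toNNReal (· * C t) univ := fun t ht =>
    ((lipschitzWith_mul_right (C t)).weaken
      (NNReal.le_toNNReal_of_coe_le (hM t (Ico_subset_Icc_self ht)))).lipschitzOnWith
  refine ODE_solution_unique_of_mem_Icc_right hLip
    (fun t ht => (hY t ht).continuousAt.continuousWithinAt)
    (fun t ht => (hY t (Ico_subset_Icc_self ht)).hasDerivWithinAt) (fun _ _ => mem_univ _)
    (fun t ht => (hZ t ht).continuousAt.continuousWithinAt)
    (fun t ht => (hZ t (Ico_subset_Icc_self ht)).hasDerivWithinAt) (fun _ _ => mem_univ _) ha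

end LinearODE

section Gauge

variable {m 𝕜 : Type*} [Fintype m] [DecidableEq m] [RCLike 𝕜]

noncomputable def gaugeTransform (A g g' : ℝ → Matrix m m 𝕜) (t : ℝ) : Matrix m m 𝕜 :=
  (g t)⁻¹ * A t * g t + (g t)⁻¹ * g' t

theorem ContinuousOn.matrix_inv {g : ℝ → Matrix m m 𝕜} {s : Set ℝ} (hg : ContinuousOn g s)
    (hunit : ∀ t ∈ s, IsUnit (g t)) : ContinuousOn (fun t => (g t)⁻¹) s := fun t ht => by
  have hdet : (g t).det ≠ 0 := ((Matrix.isUnit_iff_isUnit_det _).mp (hunit t ht)).ne_zero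
  have hinv : ContinuousAt Ring.inverse (g t).det := by
    simpa only [Ring.inverse_eq_inv'] using continuousAt_inv₀ hdet
  exact (continuousAt_matrix_inv _ hinv).comp_continuousWithinAt (hg t ht)

theorem ContinuousOn.gaugeTransform {A g g' : ℝ → Matrix m m 𝕜} {s : Set ℝ}
    (hA : ContinuousOn A s) (hg : ContinuousOn g s) (hg' : ContinuousOn g' s)
    (hunit : ∀ t ∈ s, IsUnit (g t)) : ContinuousOn (gaugeTransform A g g') s :=
  (((hg.matrix_inv hunit).mul hA).mul hg).add ((hg.matrix_inv hunit).mul hg')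

theorem hasDerivAt_mul_mul_gaugeTransform {A g g' Y : ℝ → Matrix m m 𝕜} {t : ℝ}
    (c : Matrix m m 𝕜) (hY : HasDerivAt Y (Y t * A t) t) (hg : HasDerivAt g (g' t) t)
    (hunit : IsUnit (g t)) :
    HasDerivAt (fun s => c * Y s * g s) (c * Y t * g t * gaugeTransform A g g' t) t := by
  have hcancel : ∀ X : Matrix m m 𝕜, g t * ((g t)⁻¹ * X) = X := fun X => by
    rw [← mul_assoc, Matrix.mul_nonsing_inv _ ((Matrix.isUnit_iff_isUnit_det _).mp hunit),
      one_mul]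
  have hprod : HasDerivAt (fun s => c * (Y s * g s)) (c * (Y t * A t * g t + Y t * g' t)) t :=
    (hY.mul hg).const_mul c
  convert hprod using 1
  · ext1 s; exact mul_assoc _ _ _
  · simp only [gaugeTransform, mul_add, mul_assoc, hcancel]

end Gauge

/-- **Gauge covariance of holonomy** (the computation at the heart of
Proposition A.2): if `A^g(t) = g(t)⁻¹·A(t)·g(t) + g(t)⁻¹·g′(t)` is the gauge
transform of `A` by a `C¹` family `g` of invertible matrices, then
`hol(A^g) = g(0)⁻¹ · hol(A) · g(1)`; in particular, if `g(0) = g(1)` then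
`Tr(hol(A^g)) = Tr(hol(A))`. -/
theorem holonomy_gauge_covariance (n : ℕ)
    (A : ℝ → Matrix (Fin n) (Fin n) ℂ) (hA : ContinuousOn A (Set.Icc 0 1))
    (g g' : ℝ → Matrix (Fin n) (Fin n) ℂ)
    (hg : ∀ t ∈ Set.Icc (0:ℝ) 1, HasDerivAt g (g' t) t)
    (hg' : ContinuousOn g' (Set.Icc 0 1))
    (hunit : ∀ t ∈ Set.Icc (0:ℝ) 1, IsUnit (g t))
    (Y Z : ℝ → Matrix (Fin n) (Fin n) ℂ)
    (hY : ∀ t ∈ Set.Icc (0:ℝ) 1, HasDerivAt Y (Y t * A t) t) (hY0 : Y 0 = 1)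
    (hZ : ∀ t ∈ Set.Icc (0:ℝ) 1,
      HasDerivAt Z (Z t * ((g t)⁻¹ * A t * g t + (g t)⁻¹ * g' t)) t)
    (hZ0 : Z 0 = 1) :
    Z 1 = (g 0)⁻¹ * Y 1 * g 1 ∧ (g 0 = g 1 → (Z 1).trace = (Y 1).trace) := by
  have hgc : ContinuousOn g (Icc 0 1) := fun t ht => (hg t ht).continuousAt.continuousWithinAt
  have hW : ∀ t ∈ Icc (0:ℝ) 1, HasDerivAt (fun s => (g 0)⁻¹ * Y s * g s)
      ((g 0)⁻¹ * Y t * g t * gaugeTransform A g g' t) t := fun t ht =>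
    hasDerivAt_mul_mul_gaugeTransform _ (hY t ht) (hg t ht) (hunit t ht)
  have hdet : ∀ t ∈ Icc (0:ℝ) 1, IsUnit (g t).det := fun t ht =>
    (Matrix.isUnit_iff_isUnit_det _).mp (hunit t ht)
  have hZW : Z 1 = (g 0)⁻¹ * Y 1 * g 1 :=
    eqOn_Icc_of_hasDerivAt_mul_right (hA.gaugeTransform hgc hg' hunit) hZ hW
      (by rw [hZ0, hY0, mul_one, Matrix.nonsing_inv_mul _ (hdet 0 (by norm_num))])
      (right_mem_Icc.mpr zero_le_one)
  refine ⟨hZW, fun hg01 => ?_⟩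
  rw [hZW, hg01, Matrix.trace_mul_cycle, Matrix.mul_nonsing_inv _ (hdet 1 (by norm_num)),
    one_mul]
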